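/- Let 0 ≤ B₀ < p < 1, T > 0, and a, b > 0 satisfy b·(e^{bT} - 1)/(p·e^{bT} - B₀) ≤ a ≤ b. Then the quantity B₀·e^{-aT} + (b/a)·(1 - e^{-aT}) is at most p. -/

import Mathlib

/-- If `0 ≤ B₀ < p < 1`, `T > 0`, `a, b > 0`, and
`b(e^{bT}-1)/(pe^{bT}-B₀) ≤ a ≤ b`, then `B₀e^{-aT} + (b/a)(1-e^{-aT}) ≤ p`. -/
theorem stmt8 (B₀ p T a b : ℝ)
    (hB₀0 : 0 ≤ B₀) (hB₀p : B₀ < p) (hp1 : p < 1) (hT : 0 < T)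
    (ha : 0 < a) (hb : 0 < b)
    (hlo : b * (Real.exp (b * T) - 1) / (p * Real.exp (b * T) - B₀) ≤ a)
    (hhi : a ≤ b) :
    B₀ * Real.exp (-a * T) + (b / a) * (1 - Real.exp (-a * T)) ≤ p := by
  set E := Real.exp (b * T) with hE
  have hE1 : 1 < E := by
    rw [hE]
    have := Real.add_one_le_exp (b * T)
    nlinarith [mul_pos hb hT]
  have hD : 0 < p * E - B₀ := by nlinarith
  have hlo' : b * (E - 1) ≤ a * (p * E - B₀) := by
    rw [div_le_iff₀ hD] at hlo; linarith
  -- p ≥ B₀*e^{-bT} + (b/a)(1 - e^{-bT})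
  have hEpos : (0:ℝ) < E := by linarith
  have heb : Real.exp (-b * T) = 1 / E := by
    rw [neg_mul, Real.exp_neg, one_div]
  have step1 : B₀ * Real.exp (-b * T) + (b / a) * (1 - Real.exp (-b * T)) ≤ p := by
    rw [heb, show B₀ * (1 / E) + (b / a) * (1 - 1 / E) = (B₀ * a + b * (E - 1)) / (a * E) by
      field_simp, div_le_iff₀ (by positivity)]
    nlinarith
  -- monotonicity step
  have hea : Real.exp (-b * T) ≤ Real.exp (-a * T) := by
    apply Real.exp_le_exp.mpr; nlinarith
  have hba : 1 ≤ b / a := (one_le_div ha).mpr hhi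
  have heapos : 0 < Real.exp (-a * T) := Real.exp_pos _
  have step2 : B₀ * Real.exp (-a * T) + (b / a) * (1 - Real.exp (-a * T)) ≤
      B₀ * Real.exp (-b * T) + (b / a) * (1 - Real.exp (-b * T)) := by
    nlinarith [sub_nonneg.mpr hea, sub_nonneg.mpr hba]
  linarith
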